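/- Let m > 0, μ ≠ μ' real, k, k' ∈ ℝ, c, c' ∈ {±1}. Define ψ^μ_{k,c}(x) = N_{k,c}^{-1/2} e^{i(μx²/2 + kx)}·(m, c√(k²+m²) − k) with N_{k,c} = 2(k²+m² − ck√(k²+m²)). Then |∫_{−∞}^{∞} ⟨ψ^{μ'}_{k',c'}(x), ψ^μ_{k,c}(x)⟩ dx| ≤ √(2π/|μ − μ'|), where ⟨u, v⟩ = conj(u₁)v₁ + conj(u₂)v₂ and the integral is an improper Riemann integral. -/

import Mathlib

open Real Filter

/-- The Dirac eigenfunction `ψ^μ_{k,c}(x) = N_{k,c}^{-1/2} e^{i(μx²/2 + kx)} (m, c√(k²+m²) − k)`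
with `N_{k,c} = 2(k²+m² − ck√(k²+m²))`, as a pair of complex components. -/
noncomputable def diracPsi (m μ k c : ℝ) (x : ℝ) : ℂ × ℂ :=
  (((2 * (k ^ 2 + m ^ 2 - c * k * Real.sqrt (k ^ 2 + m ^ 2))) ^ (-(1 / 2 : ℝ)) : ℝ) *
      Complex.exp (Complex.I * (μ * x ^ 2 / 2 + k * x)) * (m : ℝ),
   ((2 * (k ^ 2 + m ^ 2 - c * k * Real.sqrt (k ^ 2 + m ^ 2))) ^ (-(1 / 2 : ℝ)) : ℝ) *
      Complex.exp (Complex.I * (μ * x ^ 2 / 2 + k * x)) *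
      ((c * Real.sqrt (k ^ 2 + m ^ 2) - k : ℝ)))

/-!
Up to normalisation, the overlap density is `C · exp (b x² + c x)` with `b = i(μ - μ')/2` and
`c = i(k - k')`, and `|C| ≤ 1` by Cauchy–Schwarz for the two spinors. So everything reduces to the
convergence of the improper Fresnel-type integral of `exp (b x² + c x)` to
`(π / -b)^{1/2} e^{-c²/4b}`, whose modulus is `√(π/|b|) = √(2π/|μ - μ'|)`.

Integrating by parts against the phase derivative `2bx + c` bounds the tail `∫ₐᵗ` by
`3/(2|b|a - |c|)`, uniformly for `Re b ≤ 0`. For `Re b < 0` the Gaussian integral is known, so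
`∫_{-R}^{R}` lies within `6/(2|b|R - |c|)` of it; replacing `b` by `b - ε` and letting `ε → 0⁺`
carries this estimate over to `Re b = 0`, because `‖b - ε‖ ≥ ‖b‖`.
-/

open Complex MeasureTheory intervalIntegral Set Topology

section Fresnel

variable {b c : ℂ}

lemma norm_cexp_quadratic_le_one (hb : b.re ≤ 0) (hc : c.re ≤ 0) {x : ℝ} (hx : 0 ≤ x) :
    ‖cexp (b * x ^ 2 + c * x)‖ ≤ 1 := by
  rw [norm_exp, Real.exp_le_one_iff]
  simp only [add_re, re_mul_ofReal, ← ofReal_pow]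
  nlinarith [sq_nonneg x]

lemma integral_cexp_quadratic_eq_by_parts {a t : ℝ}
    (hg : ∀ x ∈ uIcc a t, 2 * b * x + c ≠ 0) :
    ∫ x in a..t, cexp (b * x ^ 2 + c * x) =
      (2 * b * t + c)⁻¹ * cexp (b * t ^ 2 + c * t) -
        (2 * b * a + c)⁻¹ * cexp (b * a ^ 2 + c * a) -
        ∫ x in a..t, -(2 * b) / (2 * b * x + c) ^ 2 * cexp (b * x ^ 2 + c * x) := by
  have hlin (x : ℝ) : HasDerivAt (fun y : ℝ => 2 * b * y + c) (2 * b) x := by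
    simpa using (((hasDerivAt_id (x : ℂ)).const_mul (2 * b)).add_const c).comp_ofReal
  have hexp (x : ℝ) : HasDerivAt (fun y : ℝ => cexp (b * y ^ 2 + c * y))
      ((2 * b * x + c) * cexp (b * x ^ 2 + c * x)) x := by
    refine (((hasDerivAt_pow 2 (x : ℂ)).const_mul b).add
      ((hasDerivAt_id (x : ℂ)).const_mul c)).cexp.comp_ofReal.congr_deriv ?_
    simp only [Pi.add_apply, id]
    push_cast; ring
  have hcont : Continuous fun x : ℝ => 2 * b * x + c := by fun_prop
  refine (integral_congr fun x hx => (inv_mul_cancel_left₀ (hg x hx) _).symm).trans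
    (integral_mul_deriv_eq_deriv_mul (fun x hx => (hlin x).inv (hg x hx)) (fun x _ => hexp x)
      ?_ ((hcont.mul (by fun_prop)).intervalIntegrable a t))
  exact (continuousOn_const.div (hcont.continuousOn.pow 2)
    fun x hx => pow_ne_zero 2 (hg x hx)).intervalIntegrable

lemma integral_div_mul_sub_sq {κ r a t : ℝ} (hκ : 0 ≤ κ) (ha : r < κ * a) (hat : a ≤ t) :
    ∫ x in a..t, κ / (κ * x - r) ^ 2 = (κ * a - r)⁻¹ - (κ * t - r)⁻¹ := by
  have hpos : ∀ x ∈ uIcc a t, 0 < κ * x - r := fun x hx => by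
    rw [uIcc_of_le hat] at hx
    nlinarith [hx.1]
  rw [integral_eq_sub_of_hasDerivAt (f := fun x => -(κ * x - r)⁻¹)]
  · ring
  · intro x hx
    convert ((((hasDerivAt_id x).const_mul κ).sub_const r).inv (hpos x hx).ne').neg using 1
    · rfl
    · simp only [mul_one, id]; ring
  · exact (continuousOn_const.div (by fun_prop)
      fun x hx => pow_ne_zero 2 (hpos x hx).ne').intervalIntegrable

lemma sub_norm_le_norm_two_mul_add {x : ℝ} (hx : 0 ≤ x) :
    2 * ‖b‖ * x - ‖c‖ ≤ ‖2 * b * x + c‖ := calc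
  _ = ‖2 * b * x‖ - ‖c‖ := by simp [abs_of_nonneg hx]
  _ ≤ ‖2 * b * x + c‖ := norm_sub_le_norm_add _ _

lemma norm_integral_div_sq_mul_cexp_quadratic_le (hb : b.re ≤ 0) (hc : c.re ≤ 0) {a t : ℝ}
    (ha : ‖c‖ < 2 * ‖b‖ * a) (hat : a ≤ t) :
    ‖∫ x in a..t, -(2 * b) / (2 * b * x + c) ^ 2 * cexp (b * x ^ 2 + c * x)‖ ≤
      (2 * ‖b‖ * a - ‖c‖)⁻¹ := by
  have ha0 : 0 < a := pos_of_mul_pos_right ((norm_nonneg c).trans_lt ha) (by positivity)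
  have hpos (x : ℝ) (hx : a ≤ x) : 0 < 2 * ‖b‖ * x - ‖c‖ := by nlinarith [norm_nonneg b]
  calc _ ≤ ∫ x in a..t, 2 * ‖b‖ / (2 * ‖b‖ * x - ‖c‖) ^ 2 := by
        refine norm_integral_le_of_norm_le hat (ae_of_all _ fun x hx => ?_) ?_
        · have hx : a ≤ x := hx.1.le
          rw [norm_mul, norm_div, norm_neg, norm_pow, norm_mul, RCLike.norm_ofNat]
          refine (mul_le_of_le_one_right (by positivity)
            (norm_cexp_quadratic_le_one hb hc (ha0.le.trans hx))).trans ?_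
          exact div_le_div_of_nonneg_left (by positivity) (pow_pos (hpos x hx) 2)
            (pow_le_pow_left₀ (hpos x hx).le (sub_norm_le_norm_two_mul_add (ha0.le.trans hx)) 2)
        · refine (continuousOn_const.div (by fun_prop) fun x hx => ?_).intervalIntegrable
          exact pow_ne_zero 2 (hpos x (uIcc_of_le hat ▸ hx).1).ne'
    _ = (2 * ‖b‖ * a - ‖c‖)⁻¹ - (2 * ‖b‖ * t - ‖c‖)⁻¹ :=
        integral_div_mul_sub_sq (by positivity) ha hat
    _ ≤ (2 * ‖b‖ * a - ‖c‖)⁻¹ := sub_le_self _ (inv_pos.2 (hpos t hat)).le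

lemma norm_integral_cexp_quadratic_le (hb : b.re ≤ 0) (hc : c.re ≤ 0) {a t : ℝ}
    (ha : ‖c‖ < 2 * ‖b‖ * a) (hat : a ≤ t) :
    ‖∫ x in a..t, cexp (b * x ^ 2 + c * x)‖ ≤ 3 / (2 * ‖b‖ * a - ‖c‖) := by
  set D := 2 * ‖b‖ * a - ‖c‖
  have ha0 : 0 < a := pos_of_mul_pos_right ((norm_nonneg c).trans_lt ha) (by positivity)
  have hg (x : ℝ) (hx : a ≤ x) : D ≤ ‖2 * b * x + c‖ :=
    le_trans (by nlinarith [norm_nonneg b]) (sub_norm_le_norm_two_mul_add (ha0.le.trans hx))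
  have hg0 : ∀ x ∈ uIcc a t, 2 * b * x + c ≠ 0 := fun x hx =>
    norm_pos_iff.1 ((sub_pos.2 ha).trans_le (hg x (uIcc_of_le hat ▸ hx).1))
  have hboundary (x : ℝ) (hx : a ≤ x) :
      ‖(2 * b * x + c)⁻¹ * cexp (b * x ^ 2 + c * x)‖ ≤ D⁻¹ := by
    rw [norm_mul, norm_inv]
    exact (mul_le_of_le_one_right (by positivity)
      (norm_cexp_quadratic_le_one hb hc (ha0.le.trans hx))).trans
        (inv_anti₀ (sub_pos.2 ha) (hg x hx))
  rw [integral_cexp_quadratic_eq_by_parts hg0]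
  calc _ ≤ D⁻¹ + D⁻¹ + D⁻¹ :=
        norm_sub_le_of_le (norm_sub_le_of_le (hboundary t hat) (hboundary a le_rfl))
          (norm_integral_div_sq_mul_cexp_quadratic_le hb hc ha hat)
    _ = 3 / D := by ring

lemma norm_integral_cexp_quadratic_sub_le (hb : b.re ≤ 0) (hc : c.re = 0) {R s t : ℝ}
    (hR : ‖c‖ < 2 * ‖b‖ * R) (hs : s ≤ -R) (ht : R ≤ t) :
    ‖(∫ x in s..t, cexp (b * x ^ 2 + c * x)) - ∫ x in -R..R, cexp (b * x ^ 2 + c * x)‖ ≤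
      6 / (2 * ‖b‖ * R - ‖c‖) := by
  have hint (u v : ℝ) : IntervalIntegrable (fun x : ℝ => cexp (b * x ^ 2 + c * x)) volume u v :=
    (by fun_prop : Continuous _).intervalIntegrable u v
  have hneg : ∫ x in s..-R, cexp (b * x ^ 2 + c * x) =
      ∫ x in R..-s, cexp (b * x ^ 2 + -c * x) := by
    have h := integral_comp_neg (a := R) (b := -s) fun x : ℝ => cexp (b * x ^ 2 + c * x)
    rw [neg_neg] at h
    rw [← h]
    exact integral_congr fun x _ => by simp
  have hleft := norm_integral_cexp_quadratic_le (c := -c) hb (by simp [hc]) (by rwa [norm_neg])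
    (show R ≤ -s by linarith)
  rw [norm_neg] at hleft
  rw [integral_interval_sub_interval_comm (hint _ _) (hint _ _) (hint _ _), integral_symm R t,
    sub_neg_eq_add, hneg]
  calc _ ≤ 3 / (2 * ‖b‖ * R - ‖c‖) + 3 / (2 * ‖b‖ * R - ‖c‖) :=
        norm_add_le_of_le hleft (norm_integral_cexp_quadratic_le hb hc.le hR ht)
    _ = 6 / (2 * ‖b‖ * R - ‖c‖) := by ring

/-- The value of `∫ x, cexp (b * x ^ 2 + c * x)` for `b.re < 0` (`integral_cexp_quadratic`); for
`b.re = 0` it is the value of the improper (Fresnel) integral. -/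
noncomputable def cexpQuadraticIntegral (b c : ℂ) : ℂ :=
  (π / -b) ^ (1 / 2 : ℂ) * cexp (-(c ^ 2 / (4 * b)))

lemma norm_integral_sub_cexpQuadraticIntegral_le_of_re_neg (hb : b.re < 0) (hc : c.re = 0) {R : ℝ}
    (hR : ‖c‖ < 2 * ‖b‖ * R) :
    ‖(∫ x in -R..R, cexp (b * x ^ 2 + c * x)) - cexpQuadraticIntegral b c‖ ≤
      6 / (2 * ‖b‖ * R - ‖c‖) := by
  have hval : ∫ x : ℝ, cexp (b * x ^ 2 + c * x) = cexpQuadraticIntegral b c := by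
    simpa [cexpQuadraticIntegral] using integral_cexp_quadratic hb c 0
  have hlim : Tendsto (fun t : ℝ => ∫ x in -t..t, cexp (b * x ^ 2 + c * x)) atTop
      (𝓝 (cexpQuadraticIntegral b c)) :=
    hval ▸ intervalIntegral_tendsto_integral (by simpa using integrable_cexp_quadratic' hb c 0)
      tendsto_neg_atTop_atBot tendsto_id
  have hR0 : 0 < R := pos_of_mul_pos_right ((norm_nonneg c).trans_lt hR) (by positivity)
  rw [norm_sub_rev]
  refine le_of_tendsto ((hlim.sub_const _).norm) ?_
  filter_upwards [eventually_ge_atTop R] with t ht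
  exact norm_integral_cexp_quadratic_sub_le (s := -t) hb.le hc hR (by linarith) ht

lemma ofReal_pi_div_neg_mem_slitPlane (hb : b.re ≤ 0) (hb0 : b ≠ 0) :
    (π : ℂ) / -b ∈ slitPlane := by
  have hn : 0 < normSq b := normSq_pos.2 hb0
  rw [mem_slitPlane_iff]
  simp only [div_re, div_im, ofReal_re, ofReal_im, neg_re, neg_im, normSq_neg, zero_mul, zero_div]
  rcases hb.lt_or_eq with h | h
  · left
    rw [add_zero]
    exact div_pos (mul_pos pi_pos (neg_pos.2 h)) hn
  · right
    have him : b.im ≠ 0 := fun h' => hb0 (Complex.ext h h')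
    simp [him, pi_ne_zero, hn.ne']

lemma continuousAt_cexpQuadraticIntegral (hb : b.re ≤ 0) (hb0 : b ≠ 0) (c : ℂ) :
    ContinuousAt (fun z => cexpQuadraticIntegral z c) b := by
  have h1 : ContinuousAt (fun z : ℂ => (π : ℂ) / -z) b :=
    continuousAt_const.div continuousAt_id.neg (neg_ne_zero.2 hb0)
  have h2 : ContinuousAt (fun z : ℂ => cexp (-(c ^ 2 / (4 * z)))) b := by
    have : (4 : ℂ) * b ≠ 0 := mul_ne_zero (by norm_num) hb0
    fun_prop (disch := assumption)
  exact (h1.cpow continuousAt_const (ofReal_pi_div_neg_mem_slitPlane hb hb0)).mul h2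

lemma norm_le_norm_sub_ofReal (hb : b.re ≤ 0) {ε : ℝ} (hε : 0 ≤ ε) : ‖b‖ ≤ ‖b - ε‖ := by
  rw [← sq_le_sq₀ (norm_nonneg _) (norm_nonneg _), Complex.sq_norm, Complex.sq_norm,
    normSq_apply, normSq_apply]
  simp only [sub_re, sub_im, ofReal_re, ofReal_im, sub_zero]
  nlinarith

lemma norm_integral_sub_cexpQuadraticIntegral_le (hb : b.re ≤ 0) (hc : c.re = 0) {R : ℝ}
    (hR : ‖c‖ < 2 * ‖b‖ * R) :
    ‖(∫ x in -R..R, cexp (b * x ^ 2 + c * x)) - cexpQuadraticIntegral b c‖ ≤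
      6 / (2 * ‖b‖ * R - ‖c‖) := by
  have hb0 : b ≠ 0 := by
    rintro rfl
    simp only [norm_zero, mul_zero, zero_mul] at hR
    exact (norm_nonneg c).not_gt hR
  have hR0 : 0 < R := pos_of_mul_pos_right ((norm_nonneg c).trans_lt hR) (by positivity)
  have hφ : ContinuousAt (fun z : ℂ =>
      (∫ x in -R..R, cexp (z * x ^ 2 + c * x)) - cexpQuadraticIntegral z c) b :=
    (continuous_parametric_intervalIntegral_of_continuous' (by fun_prop) _ _).continuousAt.sub
      (continuousAt_cexpQuadraticIntegral hb hb0 c)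
  have hlim : Tendsto (fun ε : ℝ => b - ε) (𝓝[>] 0) (𝓝 b) := by
    refine (Continuous.tendsto' (by fun_prop) 0 b ?_).mono_left nhdsWithin_le_nhds
    simp
  refine le_of_tendsto (hφ.tendsto.comp hlim).norm ?_
  filter_upwards [self_mem_nhdsWithin] with ε (hε : 0 < ε)
  have hnorm := norm_le_norm_sub_ofReal hb hε.le
  have hR' : ‖c‖ < 2 * ‖b - ε‖ * R := hR.trans_le (by gcongr)
  refine (norm_integral_sub_cexpQuadraticIntegral_le_of_re_neg (by simp; linarith) hc hR').trans ?_
  gcongr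

theorem tendsto_intervalIntegral_cexp_quadratic (hb : b.re ≤ 0) (hb0 : b ≠ 0) (hc : c.re = 0) :
    Tendsto (fun p : ℝ × ℝ => ∫ x in p.1..p.2, cexp (b * x ^ 2 + c * x)) (atBot ×ˢ atTop)
      (𝓝 (cexpQuadraticIntegral b c)) := by
  have hlin : Tendsto (fun R : ℝ => 2 * ‖b‖ * R) atTop atTop :=
    tendsto_id.const_mul_atTop (by positivity)
  have hbound : Tendsto (fun R : ℝ => 12 / (2 * ‖b‖ * R - ‖c‖)) atTop (𝓝 0) :=
    tendsto_const_nhds.div_atTop (tendsto_atTop_add_const_right _ _ hlin)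
  rw [Metric.tendsto_nhds]
  intro δ hδ
  obtain ⟨R, hRδ, hR⟩ :=
    ((hbound.eventually (gt_mem_nhds hδ)).and (hlin.eventually_gt_atTop ‖c‖)).exists
  filter_upwards [(eventually_le_atBot (-R)).prod_inl atTop,
    (eventually_ge_atTop R).prod_inr atBot] with p hs ht
  rw [dist_eq_norm]
  calc _ ≤ ‖(∫ x in p.1..p.2, cexp (b * x ^ 2 + c * x)) -
          ∫ x in -R..R, cexp (b * x ^ 2 + c * x)‖ +
        ‖(∫ x in -R..R, cexp (b * x ^ 2 + c * x)) - cexpQuadraticIntegral b c‖ :=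
        norm_sub_le_norm_sub_add_norm_sub _ _ _
    _ ≤ 6 / (2 * ‖b‖ * R - ‖c‖) + 6 / (2 * ‖b‖ * R - ‖c‖) :=
        add_le_add (norm_integral_cexp_quadratic_sub_le hb hc hR hs ht)
          (norm_integral_sub_cexpQuadraticIntegral_le hb hc hR)
    _ = 12 / (2 * ‖b‖ * R - ‖c‖) := by ring
    _ < δ := hRδ

lemma norm_cexpQuadraticIntegral (hb : b.re = 0) (hc : c.re = 0) :
    ‖cexpQuadraticIntegral b c‖ = √(π / ‖b‖) := by
  have hexp : ‖cexp (-(c ^ 2 / (4 * b)))‖ = 1 := by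
    rw [norm_exp]
    simp [div_re, sq, hb, hc]
  rw [cexpQuadraticIntegral, norm_mul, hexp, mul_one,
    show (1 / 2 : ℂ) = ((1 / 2 : ℝ) : ℂ) by simp, norm_cpow_real, norm_div, norm_neg,
    Complex.norm_of_nonneg pi_pos.le, sqrt_eq_rpow]

end Fresnel

noncomputable def diracNormSq (m k c : ℝ) : ℝ :=
  2 * (k ^ 2 + m ^ 2 - c * k * √(k ^ 2 + m ^ 2))

noncomputable def diracLower (m k c : ℝ) : ℝ := c * √(k ^ 2 + m ^ 2) - k

lemma diracNormSq_eq {c : ℝ} (hc : c ^ 2 = 1) (m k : ℝ) :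
    diracNormSq m k c = m ^ 2 + diracLower m k c ^ 2 := by
  have hs : √(k ^ 2 + m ^ 2) ^ 2 = k ^ 2 + m ^ 2 := sq_sqrt (by positivity)
  rw [diracNormSq, diracLower]
  linear_combination -(k ^ 2 + m ^ 2) * hc - c ^ 2 * hs

/-- Cauchy–Schwarz in `ℝ²`; a zero vector is harmless because `0 ^ (-1/2) = 0`. -/
lemma rpow_neg_half_mul_rpow_neg_half_mul_abs_le_one (p q r s : ℝ) :
    (p ^ 2 + q ^ 2) ^ (-(1 / 2 : ℝ)) * (r ^ 2 + s ^ 2) ^ (-(1 / 2 : ℝ)) * |p * r + q * s| ≤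
      1 := by
  have hcs : |p * r + q * s| ≤ √(p ^ 2 + q ^ 2) * √(r ^ 2 + s ^ 2) := by
    rw [← sqrt_mul (by positivity)]
    exact abs_le_sqrt (by nlinarith [sq_nonneg (p * s - q * r)])
  rw [rpow_neg (by positivity), rpow_neg (by positivity), ← sqrt_eq_rpow, ← sqrt_eq_rpow,
    ← mul_inv]
  exact inv_mul_le_one_of_le₀ hcs (by positivity)

noncomputable def diracOverlapCoeff (m k' c' k c : ℝ) : ℝ :=
  diracNormSq m k' c' ^ (-(1 / 2 : ℝ)) * diracNormSq m k c ^ (-(1 / 2 : ℝ)) *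
    (m * m + diracLower m k' c' * diracLower m k c)

lemma abs_diracOverlapCoeff_le_one {m k' c' k c : ℝ} (hc' : c' ^ 2 = 1) (hc : c ^ 2 = 1) :
    |diracOverlapCoeff m k' c' k c| ≤ 1 := by
  rw [diracOverlapCoeff, diracNormSq_eq hc', diracNormSq_eq hc, abs_mul,
    abs_of_nonneg (by positivity)]
  exact rpow_neg_half_mul_rpow_neg_half_mul_abs_le_one _ _ _ _

lemma conj_diracPsi_mul_add (m μ μ' k k' c c' x : ℝ) :
    (starRingEnd ℂ) (diracPsi m μ' k' c' x).1 * (diracPsi m μ k c x).1 +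
      (starRingEnd ℂ) (diracPsi m μ' k' c' x).2 * (diracPsi m μ k c x).2 =
    (diracOverlapCoeff m k' c' k c : ℂ) *
      cexp ((μ - μ') / 2 * I * x ^ 2 + (k - k') * I * x) := by
  have hphase : (starRingEnd ℂ) (cexp (I * (μ' * x ^ 2 / 2 + k' * x))) *
      cexp (I * (μ * x ^ 2 / 2 + k * x)) =
        cexp ((μ - μ') / 2 * I * x ^ 2 + (k - k') * I * x) := by
    rw [← exp_conj, ← Complex.exp_add]
    congr 1
    simp only [map_mul, map_add, map_div₀, map_pow, conj_I, conj_ofReal, map_ofNat]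
    ring
  simp only [diracPsi, map_mul, conj_ofReal, diracOverlapCoeff, diracNormSq, diracLower]
  rw [← hphase]
  push_cast
  ring

theorem dirac_overlap_bound_general (m : ℝ) (μ μ' : ℝ) (hμ : μ ≠ μ')
    (k k' : ℝ) (c c' : ℝ) (hc : c = 1 ∨ c = -1) (hc' : c' = 1 ∨ c' = -1) :
    ∃ L : ℂ,
      Tendsto (fun p : ℝ × ℝ =>
          ∫ x in p.1..p.2,
            (starRingEnd ℂ) (diracPsi m μ' k' c' x).1 * (diracPsi m μ k c x).1 +
            (starRingEnd ℂ) (diracPsi m μ' k' c' x).2 * (diracPsi m μ k c x).2)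
        (Filter.atBot ×ˢ Filter.atTop) (nhds L) ∧
      ‖L‖ ≤ Real.sqrt (2 * Real.pi / |μ - μ'|) := by
  set b : ℂ := (μ - μ') / 2 * I
  have hb : b.re = 0 := by simp [b]
  have hb0 : b ≠ 0 := by simp [b, sub_eq_zero, hμ]
  have hk : ((k - k' : ℂ) * I).re = 0 := by simp
  refine ⟨diracOverlapCoeff m k' c' k c * cexpQuadraticIntegral b ((k - k') * I), ?_, ?_⟩
  · simp_rw [conj_diracPsi_mul_add, intervalIntegral.integral_const_mul]
    exact (tendsto_intervalIntegral_cexp_quadratic hb.le hb0 hk).const_mul _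
  · have hnorm : ‖b‖ = |μ - μ'| / 2 := by
      simp [b, ← ofReal_sub, Real.norm_eq_abs]
    rw [norm_mul, norm_real, Real.norm_eq_abs, norm_cexpQuadraticIntegral hb hk, hnorm]
    calc _ ≤ 1 * √(π / (|μ - μ'| / 2)) := mul_le_mul_of_nonneg_right
          (abs_diracOverlapCoeff_le_one (sq_eq_one_iff.2 hc') (sq_eq_one_iff.2 hc)) (sqrt_nonneg _)
      _ = √(2 * π / |μ - μ'|) := by rw [one_mul, div_div_eq_mul_div, mul_comm]

theorem dirac_overlap_bound (m : ℝ) (hm : 0 < m) (μ μ' : ℝ) (hμ : μ ≠ μ')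
    (k k' : ℝ) (c c' : ℝ) (hc : c = 1 ∨ c = -1) (hc' : c' = 1 ∨ c' = -1) :
    ∃ L : ℂ,
      Tendsto (fun p : ℝ × ℝ =>
          ∫ x in p.1..p.2,
            (starRingEnd ℂ) (diracPsi m μ' k' c' x).1 * (diracPsi m μ k c x).1 +
            (starRingEnd ℂ) (diracPsi m μ' k' c' x).2 * (diracPsi m μ k c x).2)
        (Filter.atBot ×ˢ Filter.atTop) (nhds L) ∧
      ‖L‖ ≤ Real.sqrt (2 * Real.pi / |μ - μ'|) :=
  dirac_overlap_bound_general m μ μ' hμ k k' c c' hc hc'
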